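/- arXiv:1501.05070 — 11 statements merged into one kernel-verified Lean document; each statement's English description precedes it below -/
import Mathlib

section
/- For all x with 0 < |x| ≤ π/2, one has (cos x + α - 1)/α ≤ sin x / x with α = π/(π-2), and this constant is best possible. -/
/-!
By evenness it suffices to show `((π - 2) cos x + 2) x ≤ π sin x` on `[0, π/2]`. Near `0` this
follows from the Taylor bounds `sin x ≥ x - x³/6 + x⁵/120 - x⁷/5040` and
`cos x ≤ 1 - x²/2 + x⁴/24`, which leave a margin of order `(π/3 - 1) x³`. At `x = π/2` it is an
equality, so no polynomial bound in `x` suffices there; in `y = π/2 - x` however the gap grows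
like `(2 - π(π - 2)/2) y > 0`, and `sin y ≤ y`, `cos y ≥ 1 - y²/2` are enough. Evaluating at
`x = π/2` shows that `π/(π - 2)` is optimal.
-/

open Real Set Finset Nat

noncomputable def sinTaylor (n : ℕ) (x : ℝ) : ℝ :=
  ∑ k ∈ range n, (-1) ^ k * x ^ (2 * k + 1) / (2 * k + 1)!

noncomputable def cosTaylor (n : ℕ) (x : ℝ) : ℝ :=
  ∑ k ∈ range n, (-1) ^ k * x ^ (2 * k) / (2 * k)!

theorem hasDerivAt_sinTaylor (n : ℕ) (x : ℝ) :
    HasDerivAt (sinTaylor n) (cosTaylor n x) x := by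
  unfold sinTaylor cosTaylor
  refine HasDerivAt.fun_sum fun k _ => ?_
  refine (((hasDerivAt_pow (2 * k + 1) x).const_mul ((-1 : ℝ) ^ k)).div_const
    ((2 * k + 1)! : ℝ)).congr_deriv ?_
  rw [factorial_succ]
  push_cast
  field_simp

theorem hasDerivAt_cosTaylor_succ (n : ℕ) (x : ℝ) :
    HasDerivAt (cosTaylor (n + 1)) (-sinTaylor n x) x := by
  have h : cosTaylor (n + 1) = fun y => (∑ k ∈ range n,
      (-1) ^ (k + 1) * y ^ (2 * (k + 1)) / (2 * (k + 1))! : ℝ) + 1 := by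
    funext y
    simp [cosTaylor, sum_range_succ']
  rw [h, sinTaylor, ← sum_neg_distrib]
  refine (HasDerivAt.fun_sum fun k _ => ?_).add_const 1
  refine (((hasDerivAt_pow (2 * (k + 1)) x).const_mul ((-1 : ℝ) ^ (k + 1))).div_const
    ((2 * (k + 1))! : ℝ)).congr_deriv ?_
  rw [show 2 * (k + 1) = 2 * k + 1 + 1 by ring, factorial_succ]
  push_cast
  field_simp
  ring

theorem nonneg_of_hasDerivAt_nonneg {f f' : ℝ → ℝ} (hf : ∀ t, HasDerivAt f (f' t) t)
    (h₀ : f 0 = 0) (hf' : ∀ t, 0 ≤ t → 0 ≤ f' t) {x : ℝ} (hx : 0 ≤ x) : 0 ≤ f x := by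
  have hmono : MonotoneOn f (Ici 0) :=
    monotoneOn_of_hasDerivWithinAt_nonneg (convex_Ici 0)
      (fun t _ => (hf t).continuousAt.continuousWithinAt)
      (fun t _ => (hf t).hasDerivWithinAt)
      (fun t ht => hf' t (interior_subset ht))
  simpa [h₀] using hmono self_mem_Ici hx hx

theorem sinTaylor_bound_of_cosTaylor_bound {n : ℕ}
    (hcos : ∀ t, 0 ≤ t → 0 ≤ (-1) ^ n * (cosTaylor (n + 1) t - cos t)) {x : ℝ} (hx : 0 ≤ x) :
    0 ≤ (-1) ^ n * (sinTaylor (n + 1) x - sin x) :=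
  nonneg_of_hasDerivAt_nonneg
    (fun t => ((hasDerivAt_sinTaylor _ t).sub (hasDerivAt_sin t)).const_mul _)
    (by simp [sinTaylor]) hcos hx

theorem cosTaylor_bound_of_sinTaylor_bound {n : ℕ}
    (hsin : ∀ t, 0 ≤ t → 0 ≤ (-1) ^ n * (sinTaylor (n + 1) t - sin t)) {x : ℝ} (hx : 0 ≤ x) :
    0 ≤ (-1) ^ (n + 1) * (cosTaylor (n + 2) x - cos x) := by
  refine nonneg_of_hasDerivAt_nonneg
    (fun t => ((hasDerivAt_cosTaylor_succ _ t).sub (hasDerivAt_cos t)).const_mul _)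
    (by simp [cosTaylor, sum_range_succ']) (fun t ht => ?_) hx
  convert hsin t ht using 1
  ring

theorem alternating_taylor_bounds (n : ℕ) {x : ℝ} (hx : 0 ≤ x) :
    0 ≤ (-1) ^ n * (cosTaylor (n + 1) x - cos x) ∧
      0 ≤ (-1) ^ n * (sinTaylor (n + 1) x - sin x) := by
  induction n generalizing x with
  | zero => simpa [cosTaylor, sinTaylor] using ⟨cos_le_one x, sin_le hx⟩
  | succ n ih =>
    have hcos : ∀ t, 0 ≤ t → 0 ≤ (-1) ^ (n + 1) * (cosTaylor (n + 2) t - cos t) :=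
      fun t ht => cosTaylor_bound_of_sinTaylor_bound (fun s hs => (ih hs).2) ht
    exact ⟨hcos x hx, sinTaylor_bound_of_cosTaylor_bound hcos hx⟩

theorem cos_le_taylor_four {x : ℝ} (hx : 0 ≤ x) : cos x ≤ 1 - x ^ 2 / 2 + x ^ 4 / 24 := by
  have h := (alternating_taylor_bounds 2 hx).1
  norm_num [cosTaylor, sum_range_succ, factorial] at h
  linarith

theorem taylor_seven_le_sin {x : ℝ} (hx : 0 ≤ x) :
    x - x ^ 3 / 6 + x ^ 5 / 120 - x ^ 7 / 5040 ≤ sin x := by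
  have h := (alternating_taylor_bounds 3 hx).2
  norm_num [sinTaylor, sum_range_succ, factorial] at h
  linarith

theorem pi_mul_sin_ge_of_le_six_fifths {x : ℝ} (hx₀ : 0 ≤ x) (hx : x ≤ 6 / 5) :
    ((π - 2) * cos x + 2) * x ≤ π * sin x := by
  have hπ₁ := pi_gt_d2
  have hπ₂ := pi_lt_d2
  have hs := mul_le_mul_of_nonneg_left (taylor_seven_le_sin hx₀) pi_pos.le
  have hc := mul_le_mul_of_nonneg_left (cos_le_taylor_four hx₀)
    (mul_nonneg (by linarith : (0 : ℝ) ≤ π - 2) hx₀)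
  have hu : x ^ 2 ≤ 36 / 25 := by nlinarith
  -- the difference of the two polynomial bounds is `x³` times this
  have hQ : 0 ≤ (π - 3) / 3 - (4 * π - 10) / 120 * x ^ 2 - π / 5040 * (x ^ 2) ^ 2 := by
    nlinarith [mul_le_mul_of_nonneg_left hu (by linarith : (0 : ℝ) ≤ 4 * π - 10),
      mul_le_mul hu hu (sq_nonneg x) (by norm_num)]
  nlinarith [mul_nonneg (pow_nonneg hx₀ 3) hQ]

theorem pi_mul_sin_ge_of_six_fifths_le {x : ℝ} (hx : 6 / 5 ≤ x) (hx₂ : x ≤ π / 2) :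
    ((π - 2) * cos x + 2) * x ≤ π * sin x := by
  have hπ₁ := pi_gt_d2
  have hπ₂ := pi_lt_d2
  obtain ⟨y, hy₀, rfl⟩ : ∃ y, 0 ≤ y ∧ x = π / 2 - y := ⟨π / 2 - x, by linarith, by ring⟩
  rw [sin_pi_div_two_sub, cos_pi_div_two_sub]
  have hs := mul_le_mul_of_nonneg_left (sin_le hy₀)
    (mul_nonneg (by linarith : (0 : ℝ) ≤ π - 2) (by linarith : (0 : ℝ) ≤ π / 2 - y))
  have hc := mul_le_mul_of_nonneg_left (one_sub_sq_div_two_le_cos (x := y)) pi_pos.le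
  -- the difference of the two bounds is `y` times this
  have hB : 0 ≤ 2 - π * (π - 2) / 2 + (π / 2 - 2) * y := by
    nlinarith [mul_le_mul_of_nonneg_left (by linarith : y ≤ π / 2 - 6 / 5)
      (by linarith : (0 : ℝ) ≤ 2 - π / 2)]
  nlinarith [mul_nonneg hy₀ hB]

theorem pi_mul_sin_ge {x : ℝ} (hx₀ : 0 ≤ x) (hx : x ≤ π / 2) :
    ((π - 2) * cos x + 2) * x ≤ π * sin x :=
  (le_total x (6 / 5)).elim (pi_mul_sin_ge_of_le_six_fifths hx₀)
    (pi_mul_sin_ge_of_six_fifths_le · hx)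

theorem sin_abs_div_abs (x : ℝ) : sin |x| / |x| = sin x / x := by
  rcases abs_cases x with ⟨h, _⟩ | ⟨h, _⟩ <;> simp [h, neg_div_neg_eq]

theorem stmt0 :
    (∀ x : ℝ, 0 < |x| → |x| ≤ π / 2 →
      (Real.cos x + π / (π - 2) - 1) / (π / (π - 2)) ≤ Real.sin x / x) ∧
    (∀ β : ℝ, 0 < β →
      (∀ x : ℝ, 0 < |x| → |x| ≤ π / 2 →
        (Real.cos x + β - 1) / β ≤ Real.sin x / x) → β ≤ π / (π - 2)) := by
  have hπ : 0 < π - 2 := by linarith [pi_gt_three]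
  constructor
  · intro x hx₀ hx
    have hα : (cos x + π / (π - 2) - 1) / (π / (π - 2)) = ((π - 2) * cos x + 2) / π := by
      field_simp
      ring
    rw [hα, ← sin_abs_div_abs, ← cos_abs, div_le_div_iff₀ pi_pos hx₀]
    linarith [pi_mul_sin_ge (abs_nonneg x) hx]
  · intro β hβ h
    have hπ2 : |π / 2| = π / 2 := abs_of_pos (by positivity)
    have h := h (π / 2) (by rw [hπ2]; positivity) hπ2.le
    rw [sin_pi_div_two, cos_pi_div_two, div_le_div_iff₀ hβ (by positivity)] at h
    rw [le_div_iff₀ hπ]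
    linarith
end

section
/- For all x with 0 < |x| < π/2, one has (x/sin x)^2 + (π²/4 - 1)·(x/tan x) ≤ π²/4, with equality attained in the limit at x = 0 and at x = ±π/2. -/
/-!
Clearing denominators and using evenness, the claim is
`x² + (π²/4 - 1) x sin x cos x ≤ (π²/4) sin² x` for `0 ≤ x ≤ π/2`.

For `x ≤ 6/5` insert the Taylor bounds `x - x³/6 ≤ sin x ≤ x - x³/6 + x⁵/120` and
`cos x ≤ 1 - x²/2 + x⁴/24`: the terms of order `x²` cancel and what remains is `x⁴` times a
cubic in `x²` which is affine and increasing in the constant `a = π²/4` and positive for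
`a ≥ 123/50` and `x² ≤ 36/25`.

Near `π/2`, with `t = π/2 - x`, the crude bounds `cos x ≤ t` and `sin x ≥ 1 - t²/2` reduce the
claim to `2t ≤ π(3 - π²/4)/2 + π²t³/16`, and `π(3 - π²/4)/2 ≈ 0.84` covers `t ≤ 2/5`.
-/

open Real

lemma le_of_hasDerivAt_le_of_nonneg {f g f' g' : ℝ → ℝ} (hf : ∀ y, HasDerivAt f (f' y) y)
    (hg : ∀ y, HasDerivAt g (g' y) y) (h₀ : f 0 ≤ g 0) (hle : ∀ y, 0 ≤ y → f' y ≤ g' y)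
    {x : ℝ} (hx : 0 ≤ x) : f x ≤ g x :=
  image_le_of_deriv_right_le_deriv_boundary (a := 0) (b := x)
    (continuous_iff_continuousAt.2 fun y => (hf y).continuousAt).continuousOn
    (fun y _ => (hf y).hasDerivWithinAt) h₀
    (continuous_iff_continuousAt.2 fun y => (hg y).continuousAt).continuousOn
    (fun y _ => (hg y).hasDerivWithinAt) (fun y hy => hle y hy.1) ⟨hx, le_rfl⟩

namespace Real

theorem cos_le_quartic {x : ℝ} (hx : 0 ≤ x) : cos x ≤ 1 - x ^ 2 / 2 + x ^ 4 / 24 :=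
  le_of_hasDerivAt_le_of_nonneg (g := fun y => 1 - y ^ 2 / 2 + y ^ 4 / 24)
    (g' := fun y => -y + y ^ 3 / 6) hasDerivAt_cos
    (fun y => (((hasDerivAt_const y 1).sub ((hasDerivAt_pow 2 y).div_const 2)).add
      ((hasDerivAt_pow 4 y).div_const 24)).congr_deriv (by norm_num; ring))
    (by norm_num) (fun y hy => by linarith [sin_ge_sub_cube hy]) hx

theorem sin_le_quintic {x : ℝ} (hx : 0 ≤ x) : sin x ≤ x - x ^ 3 / 6 + x ^ 5 / 120 :=
  le_of_hasDerivAt_le_of_nonneg (g := fun y => y - y ^ 3 / 6 + y ^ 5 / 120) hasDerivAt_sin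
    (fun y => (((hasDerivAt_id y).sub ((hasDerivAt_pow 3 y).div_const 6)).add
      ((hasDerivAt_pow 5 y).div_const 120)).congr_deriv (by norm_num; ring))
    (by norm_num) (fun y hy => cos_le_quartic hy) hx

end Real

lemma sq_add_mul_sin_mul_cos_le_of_le_six_fifths {a x : ℝ} (ha : 123 / 50 ≤ a) (hx₀ : 0 ≤ x)
    (hx₁ : x ≤ 6 / 5) : x ^ 2 + (a - 1) * (x * sin x * cos x) ≤ a * sin x ^ 2 := by
  have hu : x ^ 2 ≤ 36 / 25 := by nlinarith
  have hs₀ : 0 ≤ x - x ^ 3 / 6 := by nlinarith [mul_nonneg hx₀ (by linarith : 0 ≤ 6 - x ^ 2)]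
  have hsin : x - x ^ 3 / 6 ≤ sin x := sin_ge_sub_cube hx₀
  have hsin_sq : (x - x ^ 3 / 6) ^ 2 ≤ sin x ^ 2 := pow_le_pow_left₀ hs₀ hsin 2
  have hsin_cos : x * sin x * cos x ≤
      x * ((1 - x ^ 2 / 2 + x ^ 4 / 24) * (x - x ^ 3 / 6 + x ^ 5 / 120)) := by
    have hcos₀ : 0 ≤ cos x :=
      cos_nonneg_of_mem_Icc ⟨by linarith [pi_pos], by linarith [pi_gt_three]⟩
    rw [mul_assoc, mul_comm (sin x)]
    exact mul_le_mul_of_nonneg_left (mul_le_mul (cos_le_quartic hx₀) (sin_le_quintic hx₀)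
      (hs₀.trans hsin) (hcos₀.trans (cos_le_quartic hx₀))) hx₀
  have hcubic : 0 ≤ 23 / 150 - 379 / 3000 * x ^ 2 + 73 / 4500 * x ^ 4 - 73 / 144000 * x ^ 6 := by
    nlinarith [mul_nonneg (sq_nonneg x) (sub_nonneg.2 hu),
      mul_nonneg (pow_nonneg (sq_nonneg x) 2) (sub_nonneg.2 hu)]
  have hslope : 0 ≤ 1 / 3 - 19 / 180 * x ^ 2 + 1 / 90 * x ^ 4 - 1 / 2880 * x ^ 6 := by
    nlinarith [mul_nonneg (sq_nonneg x) (sub_nonneg.2 hu),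
      mul_nonneg (pow_nonneg (sq_nonneg x) 2) (sub_nonneg.2 hu)]
  nlinarith [mul_nonneg (pow_nonneg hx₀ 4) hcubic,
    mul_nonneg (mul_nonneg (pow_nonneg hx₀ 4) hslope) (sub_nonneg.2 ha),
    mul_le_mul_of_nonneg_left hsin_sq (by linarith : 0 ≤ a),
    mul_le_mul_of_nonneg_left hsin_cos (by linarith : 0 ≤ a - 1)]

lemma sq_add_mul_sin_mul_cos_le_of_pi_div_two_sub_le {x : ℝ} (hx₀ : π / 2 - 2 / 5 ≤ x)
    (hx₁ : x ≤ π / 2) :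
    x ^ 2 + (π ^ 2 / 4 - 1) * (x * sin x * cos x) ≤ π ^ 2 / 4 * sin x ^ 2 := by
  obtain ⟨t, rfl⟩ : ∃ t, x = π / 2 - t := ⟨π / 2 - x, by ring⟩
  rw [sin_pi_div_two_sub, cos_pi_div_two_sub]
  have ht₀ : 0 ≤ t := by linarith
  have hπ : 4 / 5 ≤ π * (3 - π ^ 2 / 4) / 2 := by nlinarith [pi_gt_d2, pi_lt_d2]
  have hcos : 1 - t ^ 2 / 2 ≤ cos t := one_sub_sq_div_two_le_cos
  have hcos_sq : (1 - t ^ 2 / 2) ^ 2 ≤ cos t ^ 2 := pow_le_pow_left₀ (by nlinarith) hcos 2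
  have hcos_sin : (π / 2 - t) * cos t * sin t ≤ (π / 2 - t) * t := by
    have hsin₀ : 0 ≤ sin t := sin_nonneg_of_nonneg_of_le_pi ht₀ (by linarith [pi_gt_three])
    rw [mul_assoc]
    exact mul_le_mul_of_nonneg_left (by nlinarith [sin_le ht₀, cos_le_one t])
      (by linarith [pi_gt_three])
  have hpoly : (π / 2 - t) ^ 2 + (π ^ 2 / 4 - 1) * ((π / 2 - t) * t) ≤
      π ^ 2 / 4 * (1 - t ^ 2 / 2) ^ 2 := by
    nlinarith [mul_nonneg ht₀ (by linarith : 0 ≤ π * (3 - π ^ 2 / 4) / 2 - 2 * t),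
      mul_nonneg (pow_nonneg ht₀ 4) (sq_nonneg π)]
  nlinarith [mul_le_mul_of_nonneg_left hcos_sin (by nlinarith [pi_gt_three] : 0 ≤ π ^ 2 / 4 - 1),
    mul_le_mul_of_nonneg_left hcos_sq (by positivity : 0 ≤ π ^ 2 / 4)]

lemma sq_add_mul_sin_mul_cos_le {x : ℝ} (hx₀ : 0 ≤ x) (hx₁ : x ≤ π / 2) :
    x ^ 2 + (π ^ 2 / 4 - 1) * (x * sin x * cos x) ≤ π ^ 2 / 4 * sin x ^ 2 := by
  rcases le_total x (6 / 5) with hx | hx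
  · exact sq_add_mul_sin_mul_cos_le_of_le_six_fifths (by nlinarith [pi_gt_d2]) hx₀ hx
  · exact sq_add_mul_sin_mul_cos_le_of_pi_div_two_sub_le (by linarith [pi_lt_d2]) hx₁

lemma div_sin_sq_add_mul_div_tan_le {x : ℝ} (hx₀ : 0 < x) (hx₁ : x < π / 2) :
    (x / sin x) ^ 2 + (π ^ 2 / 4 - 1) * (x / tan x) ≤ π ^ 2 / 4 := by
  have hsin : 0 < sin x := sin_pos_of_pos_of_lt_pi hx₀ (by linarith [pi_pos])
  have hcos : 0 < cos x := cos_pos_of_mem_Ioo ⟨by linarith, hx₁⟩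
  calc (x / sin x) ^ 2 + (π ^ 2 / 4 - 1) * (x / tan x)
      = (x ^ 2 + (π ^ 2 / 4 - 1) * (x * sin x * cos x)) / sin x ^ 2 := by
        rw [tan_eq_sin_div_cos]
        field_simp
    _ ≤ π ^ 2 / 4 := by
        rw [div_le_iff₀ (by positivity)]
        exact sq_add_mul_sin_mul_cos_le hx₀.le hx₁.le

theorem stmt2 (x : ℝ) (h0 : 0 < |x|) (h1 : |x| < π / 2) :
    (x / Real.sin x) ^ 2 + (π ^ 2 / 4 - 1) * (x / Real.tan x) ≤ π ^ 2 / 4 := by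
  rcases lt_or_gt_of_ne (abs_pos.1 h0) with hx | hx
  · have h := div_sin_sq_add_mul_div_tan_le (neg_pos.2 hx) (by rwa [abs_of_neg hx] at h1)
    rwa [sin_neg, tan_neg, neg_div_neg_eq, neg_div_neg_eq] at h
  · exact div_sin_sq_add_mul_div_tan_le hx (by rwa [abs_of_pos hx] at h1)
end

section
/- For all x with 0 < |x| < π/2, one has (x/sin x)^α + x/tan x < (π/2)^α, where α = π/(π-2). -/
/-!
Both sides are even in `x`, so let `0 < x < π / 2` and put `u = x / sin x`; then
`1 ≤ u ≤ π / 2` by Jordan's inequality. As `α ≥ 1` and `u ≥ 1`, the tangent line of `t ↦ t ^ α`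
at `u` gives `(π / 2) ^ α ≥ u ^ α + α (π / 2 - u)`, so it suffices to show
`x / tan x < α (π / 2 - x / sin x)`. Multiplied by `2 sin x`, this says that
`g(x) = α π sin x - 2 x cos x - 2 α x` is positive on `(0, π / 2)`. Now `g` vanishes at both
endpoints and is strictly concave in between, because `g'' = (4 - α π) sin x + 2 x cos x` and
`x cos x < sin x` and `α π ≥ 6`.
-/

open Real Set

lemma add_mul_sub_le_rpow {p u v : ℝ} (hp : 1 ≤ p) (hu : 1 ≤ u) (huv : u ≤ v) :
    u ^ p + p * (v - u) ≤ v ^ p := by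
  have hu0 : 0 < u := by linarith
  have hbernoulli : 1 + p * (v / u - 1) ≤ (v / u) ^ p := by
    simpa using one_add_mul_self_le_rpow_one_add (s := v / u - 1)
      (by linarith [(one_le_div hu0).2 huv]) hp
  have hu_le : u ≤ u ^ p := by simpa using rpow_le_rpow_of_exponent_le hu hp
  have hratio : 0 ≤ p * (v / u - 1) := mul_nonneg (by linarith) (by simp [one_le_div hu0, huv])
  calc u ^ p + p * (v - u) = u ^ p + p * (v / u - 1) * u := by field_simp
    _ ≤ u ^ p * (1 + p * (v / u - 1)) := by nlinarith
    _ ≤ u ^ p * (v / u) ^ p := by gcongr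
    _ = v ^ p := by rw [div_rpow (by linarith) hu0.le, mul_div_cancel₀ _ (by positivity)]

noncomputable def tanGap (α y : ℝ) : ℝ :=
  α * π * sin y - 2 * y * cos y - 2 * α * y

lemma hasDerivAt_tanGap (α y : ℝ) :
    HasDerivAt (tanGap α) ((α * π - 2) * cos y + 2 * y * sin y - 2 * α) y :=
  ((((hasDerivAt_sin y).const_mul (α * π)).sub
    (((hasDerivAt_id' y).const_mul 2).mul (hasDerivAt_cos y))).sub
    ((hasDerivAt_id' y).const_mul (2 * α))).congr_deriv (by ring)

lemma deriv2_tanGap (α y : ℝ) :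
    deriv^[2] (tanGap α) y = (4 - α * π) * sin y + 2 * y * cos y := by
  have hderiv : deriv (tanGap α) = fun y ↦ (α * π - 2) * cos y + 2 * y * sin y - 2 * α :=
    funext fun y ↦ (hasDerivAt_tanGap α y).deriv
  have hderiv2 : HasDerivAt (fun y ↦ (α * π - 2) * cos y + 2 * y * sin y - 2 * α)
      ((4 - α * π) * sin y + 2 * y * cos y) y :=
    ((((hasDerivAt_cos y).const_mul (α * π - 2)).add
      (((hasDerivAt_id' y).const_mul 2).mul (hasDerivAt_sin y))).sub
      (hasDerivAt_const y (2 * α))).congr_deriv (by ring)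
  rw [Function.iterate_succ_apply, Function.iterate_one, hderiv, hderiv2.deriv]

lemma strictConcaveOn_tanGap {α : ℝ} (hα : 6 ≤ α * π) :
    StrictConcaveOn ℝ (Icc 0 (π / 2)) (tanGap α) := by
  refine strictConcaveOn_of_deriv2_neg (convex_Icc _ _)
    (by unfold tanGap; fun_prop) fun y hy ↦ ?_
  rw [interior_Icc] at hy
  have hsin : 0 < sin y := sin_pos_of_pos_of_lt_pi hy.1 (by linarith [hy.2, pi_pos])
  have hcos : 0 < cos y := cos_pos_of_mem_Ioo ⟨by linarith [hy.1, pi_pos], hy.2⟩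
  have hycos : y * cos y < sin y := by
    simpa [tan_eq_sin_div_cos, lt_div_iff₀ hcos] using lt_tan hy.1 hy.2
  rw [deriv2_tanGap]
  nlinarith

lemma tanGap_pos {α x : ℝ} (hα : 6 ≤ α * π) (hx0 : 0 < x) (hx1 : x < π / 2) :
    0 < tanGap α x := by
  have hπ := pi_pos
  have h := (strictConcaveOn_tanGap hα).lt_on_openSegment
    (left_mem_Icc.2 (by positivity)) (right_mem_Icc.2 (by positivity)) (by positivity)
    (x := 0) (z := x) (by rw [openSegment_eq_Ioo (by positivity)]; exact ⟨hx0, hx1⟩)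
  have hleft : tanGap α 0 = 0 := by simp [tanGap]
  have hright : tanGap α (π / 2) = 0 := by simp [tanGap]; ring
  simpa [hleft, hright] using h

lemma div_tan_lt_mul_sub_div_sin {α x : ℝ} (hα : 6 ≤ α * π) (hx0 : 0 < x) (hx1 : x < π / 2) :
    x / tan x < α * (π / 2 - x / sin x) := by
  have hsin : 0 < sin x := sin_pos_of_pos_of_lt_pi hx0 (by linarith [pi_pos])
  have hgap := tanGap_pos hα hx0 hx1
  rw [tanGap] at hgap
  rw [tan_eq_sin_div_cos, div_div_eq_mul_div, div_lt_iff₀ hsin]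
  field_simp
  linarith

lemma div_sin_rpow_add_div_tan_lt {α x : ℝ} (hα : 6 ≤ α * π) (hx0 : 0 < x) (hx1 : x < π / 2) :
    (x / sin x) ^ α + x / tan x < (π / 2) ^ α := by
  have hα1 : 1 ≤ α := by nlinarith [pi_le_four, pi_pos]
  have hsin : 0 < sin x := sin_pos_of_pos_of_lt_pi hx0 (by linarith [pi_pos])
  have hu1 : 1 ≤ x / sin x := (one_le_div hsin).2 (sin_lt hx0).le
  have hu_le : x / sin x ≤ π / 2 := by
    have := mul_le_sin hx0.le hx1.le
    rw [div_le_iff₀ hsin]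
    field_simp at this ⊢
    linarith
  linarith [add_mul_sub_le_rpow hα1 hu1 hu_le, div_tan_lt_mul_sub_div_sin hα hx0 hx1]

theorem stmt5 (x : ℝ) (h0 : 0 < |x|) (h1 : |x| < π / 2) :
    (x / Real.sin x) ^ (π / (π - 2)) + x / Real.tan x < (π / 2) ^ (π / (π - 2)) := by
  have hα : 6 ≤ π / (π - 2) * π := by
    have : 0 < π - 2 := by linarith [pi_gt_three]
    rw [div_mul_eq_mul_div, le_div_iff₀ this]
    nlinarith [sq_nonneg (π - 3)]
  have h := div_sin_rpow_add_div_tan_lt hα h0 h1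
  rcases abs_choice x with hx | hx <;> rw [hx] at h
  · exact h
  · simpa [neg_div_neg_eq] using h
end

section
/- For all x with 0 < |x| < π/2, one has 3·cos x ≤ x/sin x + 2·(x/tan x) ≤ 2 + cos x. -/
/-!
Since `x / sin x + 2 * (x / tan x) = x (1 + 2 cos x) / sin x` is even in `x`, it suffices to show
`3 sin x cos x ≤ x (1 + 2 cos x) ≤ (2 + cos x) sin x` for `0 ≤ x ≤ π / 2`. Both differences vanish
at `0` and are nondecreasing: the derivative of the upper one is `2 sin x (x - sin x)`, and that of
the lower one is `4 + 2 cos x - 6 cos² x - 2 x sin x`, which is at least `6 cos x (1 - cos x)` by the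
half-angle bound `x sin x ≤ 2 (1 - cos x)`.
-/

open Real Set

lemma le_apply_of_hasDerivAt_nonneg {g g' : ℝ → ℝ} {a b x : ℝ}
    (hg : ∀ y, HasDerivAt g (g' y) y) (hg' : ∀ y ∈ Ioo a b, 0 ≤ g' y) (hx : x ∈ Icc a b) :
    g a ≤ g x := by
  have hmono : MonotoneOn g (Icc a b) :=
    monotoneOn_of_hasDerivWithinAt_nonneg (convex_Icc a b)
      (fun y _ => (hg y).continuousAt.continuousWithinAt)
      (fun y _ => (hg y).hasDerivWithinAt)
      (fun y hy => hg' y (by rwa [interior_Icc] at hy))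
  exact hmono (left_mem_Icc.mpr (hx.1.trans hx.2)) hx hx.1

lemma abs_div_apply_abs {f : ℝ → ℝ} (hf : Function.Odd f) (x : ℝ) : |x| / f |x| = x / f x := by
  rcases abs_choice x with h | h <;> simp [h, hf x, neg_div_neg_eq]

lemma mul_cos_le_sin {t : ℝ} (ht₀ : 0 ≤ t) (ht : t ≤ π) : t * cos t ≤ sin t := by
  have hsin : 0 ≤ sin t := sin_nonneg_of_nonneg_of_le_pi ht₀ ht
  rcases lt_or_ge t (π / 2) with hlt | hge
  · have hcos : 0 < cos t := cos_pos_of_mem_Ioo ⟨by linarith [pi_pos], hlt⟩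
    have := le_tan ht₀ hlt
    rwa [tan_eq_sin_div_cos, le_div_iff₀ hcos] at this
  · have hcos : cos t ≤ 0 := cos_nonpos_of_pi_div_two_le_of_le hge (by linarith [pi_pos])
    nlinarith

lemma mul_sin_le_two_mul_one_sub_cos {x : ℝ} (hx₀ : 0 ≤ x) (hx : x ≤ 2 * π) :
    x * sin x ≤ 2 * (1 - cos x) := by
  have hhalf := mul_cos_le_sin (t := x / 2) (by linarith) (by linarith)
  have hsin : 0 ≤ sin (x / 2) := sin_nonneg_of_nonneg_of_le_pi (by linarith) (by linarith)
  have hsin_x : sin x = 2 * sin (x / 2) * cos (x / 2) := by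
    rw [← sin_two_mul]; ring_nf
  have hcos_x : cos x = 1 - 2 * sin (x / 2) ^ 2 := by
    rw [← cos_two_mul_eq_one_sub]; ring_nf
  rw [hsin_x, hcos_x]
  nlinarith [mul_le_mul_of_nonneg_left hhalf hsin]

lemma three_mul_sin_mul_cos_le {x : ℝ} (hx₀ : 0 ≤ x) (hx : x ≤ π / 2) :
    3 * sin x * cos x ≤ x * (1 + 2 * cos x) := by
  let g : ℝ → ℝ := fun y => y * (1 + 2 * cos y) - 3 * sin y * cos y
  have hg : ∀ y, HasDerivAt g (4 + 2 * cos y - 6 * cos y ^ 2 - 2 * (y * sin y)) y := by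
    intro y
    have := ((hasDerivAt_id' y).mul (((hasDerivAt_cos y).const_mul 2).const_add 1)).sub
      (((hasDerivAt_sin y).const_mul 3).mul (hasDerivAt_cos y))
    exact this.congr_deriv (by linear_combination 3 * sin_sq_add_cos_sq y)
  have hg' : ∀ y ∈ Ioo 0 (π / 2), 0 ≤ 4 + 2 * cos y - 6 * cos y ^ 2 - 2 * (y * sin y) := by
    rintro y ⟨hy₀, hy⟩
    have hcos : 0 ≤ cos y := cos_nonneg_of_mem_Icc ⟨by linarith [pi_pos], hy.le⟩
    have := mul_sin_le_two_mul_one_sub_cos hy₀.le (by linarith [pi_pos])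
    nlinarith [cos_le_one y]
  have := le_apply_of_hasDerivAt_nonneg hg hg' ⟨hx₀, hx⟩
  simp only [g, zero_mul, sin_zero, mul_zero, sub_zero] at this
  linarith

lemma mul_one_add_two_mul_cos_le {x : ℝ} (hx₀ : 0 ≤ x) (hx : x ≤ π) :
    x * (1 + 2 * cos x) ≤ (2 + cos x) * sin x := by
  let g : ℝ → ℝ := fun y => (2 + cos y) * sin y - y * (1 + 2 * cos y)
  have hg : ∀ y, HasDerivAt g (2 * sin y * (y - sin y)) y := by
    intro y
    have := (((hasDerivAt_cos y).const_add 2).mul (hasDerivAt_sin y)).sub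
      ((hasDerivAt_id' y).mul (((hasDerivAt_cos y).const_mul 2).const_add 1))
    exact this.congr_deriv (by linear_combination sin_sq_add_cos_sq y)
  have hg' : ∀ y ∈ Ioo 0 π, 0 ≤ 2 * sin y * (y - sin y) := by
    rintro y ⟨hy₀, hy⟩
    exact mul_nonneg (mul_nonneg zero_le_two (sin_nonneg_of_nonneg_of_le_pi hy₀.le hy.le))
      (sub_nonneg.mpr (sin_le hy₀.le))
  have := le_apply_of_hasDerivAt_nonneg hg hg' ⟨hx₀, hx⟩
  simp only [g, zero_mul, sin_zero, mul_zero, sub_zero] at this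
  linarith

lemma div_sin_add_two_mul_div_tan {x : ℝ} (hsin : sin x ≠ 0) :
    x / sin x + 2 * (x / tan x) = x * (1 + 2 * cos x) / sin x := by
  rw [tan_eq_sin_div_cos]
  field_simp

theorem stmt6 (x : ℝ) (h0 : 0 < |x|) (h1 : |x| < π / 2) :
    3 * Real.cos x ≤ x / Real.sin x + 2 * (x / Real.tan x) ∧
    x / Real.sin x + 2 * (x / Real.tan x) ≤ 2 + Real.cos x := by
  rw [← abs_div_apply_abs sin_neg, ← abs_div_apply_abs tan_neg, ← cos_abs]
  have hsin : 0 < sin |x| := sin_pos_of_pos_of_lt_pi h0 (by linarith [pi_pos])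
  rw [div_sin_add_two_mul_div_tan hsin.ne', le_div_iff₀ hsin, div_le_iff₀ hsin]
  exact ⟨by linarith [three_mul_sin_mul_cos_le h0.le h1.le],
    mul_one_add_two_mul_cos_le h0.le (by linarith [pi_pos])⟩
end

section
/- For every real x ≠ 0, one has tanh x / x ≤ 2/(√(9 + 4x²) − 1), and moreover 2/(√(9+4x²)−1) − tanh x / x → 0 as x → ∞. -/
/-!
For `x > 0`, clearing denominators and squaring turns the bound into
`2 sinh² x ≤ x² + x sinh x cosh x`, which for `t = 2x` reads `4 (cosh t - 1) ≤ t² + t sinh t`.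
The Taylor coefficients of `t²ᵏ` on the two sides are `4 / (2k)!` and `2k / (2k)!`; accordingly the
difference vanishes to third order at `0` and its fourth derivative is `t sinh t ≥ 0`, so four
monotonicity steps prove it. The bound is even in `x`, and both terms of the difference tend to `0`
because `tanh` is bounded.
-/

open Real Filter Topology

theorem le_of_hasDerivAt_nonneg {f f' : ℝ → ℝ} {a b : ℝ} (hf : ∀ x, HasDerivAt f (f' x) x)
    (hf' : ∀ x, a ≤ x → 0 ≤ f' x) (hab : a ≤ b) : f a ≤ f b :=
  monotoneOn_of_hasDerivWithinAt_nonneg (convex_Ici a)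
    (fun x _ ↦ (hf x).continuousAt.continuousWithinAt) (fun x _ ↦ (hf x).hasDerivWithinAt)
    (fun x hx ↦ hf' x (interior_subset hx)) Set.self_mem_Ici hab hab

namespace Real

variable {t : ℝ}

theorem sinh_le_mul_cosh (ht : 0 ≤ t) : sinh t ≤ t * cosh t := by
  have := le_of_hasDerivAt_nonneg (f := fun t ↦ t * cosh t - sinh t) (f' := fun t ↦ t * sinh t)
    (fun t ↦ (((hasDerivAt_id' t).mul (hasDerivAt_cosh t)).sub (hasDerivAt_sinh t)).congr_deriv
      (by ring))
    (fun t ht ↦ mul_nonneg ht (sinh_nonneg_iff.2 ht)) ht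
  simpa using this

theorem two_mul_cosh_sub_one_le (ht : 0 ≤ t) : 2 * (cosh t - 1) ≤ t * sinh t := by
  have := le_of_hasDerivAt_nonneg (f := fun t ↦ t * sinh t - 2 * cosh t)
    (f' := fun t ↦ t * cosh t - sinh t)
    (fun t ↦ (((hasDerivAt_id' t).mul (hasDerivAt_sinh t)).sub
      ((hasDerivAt_cosh t).const_mul 2)).congr_deriv (by ring))
    (fun t ht ↦ sub_nonneg.2 (sinh_le_mul_cosh ht)) ht
  linarith [cosh_zero]

theorem three_mul_sinh_le (ht : 0 ≤ t) : 3 * sinh t ≤ t * (2 + cosh t) := by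
  have := le_of_hasDerivAt_nonneg (f := fun t ↦ t * (2 + cosh t) - 3 * sinh t)
    (f' := fun t ↦ t * sinh t - 2 * (cosh t - 1))
    (fun t ↦ (((hasDerivAt_id' t).mul ((hasDerivAt_cosh t).const_add 2)).sub
      ((hasDerivAt_sinh t).const_mul 3)).congr_deriv (by ring))
    (fun t ht ↦ sub_nonneg.2 (two_mul_cosh_sub_one_le ht)) ht
  linarith [sinh_zero]

theorem four_mul_cosh_sub_one_le (ht : 0 ≤ t) : 4 * (cosh t - 1) ≤ t ^ 2 + t * sinh t := by
  have := le_of_hasDerivAt_nonneg (f := fun t ↦ t ^ 2 + t * sinh t - 4 * cosh t)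
    (f' := fun t ↦ t * (2 + cosh t) - 3 * sinh t)
    (fun t ↦ (((hasDerivAt_pow 2 t).add ((hasDerivAt_id' t).mul (hasDerivAt_sinh t))).sub
      ((hasDerivAt_cosh t).const_mul 4)).congr_deriv (by ring))
    (fun t ht ↦ sub_nonneg.2 (three_mul_sinh_le ht)) ht
  linarith [cosh_zero]

theorem tanh_div_self_le {x : ℝ} (hx : 0 < x) :
    tanh x / x ≤ 2 / (√(9 + 4 * x ^ 2) - 1) := by
  have hs : 0 < sinh x := sinh_pos_iff.2 hx
  have hc : 0 < cosh x := cosh_pos x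
  have htanh : 0 < tanh x := tanh_eq_sinh_div_cosh x ▸ div_pos hs hc
  have hr : 1 < √(9 + 4 * x ^ 2) := lt_sqrt_of_sq_lt (by nlinarith)
  have key : 2 * sinh x ^ 2 ≤ x ^ 2 + x * sinh x * cosh x := by
    have := four_mul_cosh_sub_one_le (by positivity : 0 ≤ 2 * x)
    rw [cosh_two_mul, sinh_two_mul, cosh_sq] at this
    linarith
  have hsqrt : √(9 + 4 * x ^ 2) - 1 ≤ 2 * x / tanh x := by
    rw [sub_le_iff_le_add', sqrt_le_left (by positivity), tanh_eq_sinh_div_cosh]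
    field_simp
    nlinarith [cosh_sq x]
  rw [div_le_div_iff₀ hx (by linarith), ← le_div_iff₀' htanh]
  linarith

theorem tendsto_tanh_div_self_atTop : Tendsto (fun x ↦ tanh x / x) atTop (𝓝 0) := by
  simp_rw [div_eq_inv_mul]
  exact tendsto_inv_atTop_zero.zero_mul_isBoundedUnder_le
    (isBoundedUnder_of ⟨1, fun x ↦ (abs_tanh_lt_one x).le⟩)

end Real

theorem stmt8 :
    (∀ x : ℝ, x ≠ 0 →
      Real.tanh x / x ≤ 2 / (Real.sqrt (9 + 4 * x ^ 2) - 1)) ∧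
    Filter.Tendsto
      (fun x : ℝ => 2 / (Real.sqrt (9 + 4 * x ^ 2) - 1) - Real.tanh x / x)
      Filter.atTop (nhds 0) := by
  refine ⟨fun x hx ↦ ?_, ?_⟩
  · rcases hx.lt_or_gt with hneg | hpos
    · simpa [neg_div_neg_eq] using tanh_div_self_le (neg_pos.2 hneg)
    · exact tanh_div_self_le hpos
  · have hsqrt : Tendsto (fun x : ℝ ↦ √(9 + 4 * x ^ 2) - 1) atTop atTop :=
      tendsto_atTop_add_const_right _ _ (tendsto_sqrt_atTop.comp (tendsto_atTop_add_const_left _ _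
        ((tendsto_pow_atTop two_ne_zero).const_mul_atTop four_pos)))
    simpa using (hsqrt.const_div_atTop 2).sub tendsto_tanh_div_self_atTop
end

section
/- For all x > 0, one has sinh x / x < (cosh x + 2)/3 < (cosh x)^{1/3} · (cosh(2x/3) + 1)/2. -/
/-!
The first inequality is `3 sinh x < x cosh x + 2x`; differentiating twice reduces it to
`sinh x < x cosh x`, and each function involved vanishes at `0` with positive derivative.

For the second, put `c = cosh (x/3) > 1`, so that `cosh x = 4c³ - 3c` and
`(cosh (2x/3) + 1)/2 = c²`. Cubing turns the claim into a polynomial inequality in `c`, which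
holds for `c > 1` because, written in powers of `c - 1`, it has only positive coefficients.
-/

open Real Set

lemma pos_of_hasDerivAt_pos_of_eq_zero {f f' : ℝ → ℝ} (hf : ∀ z, HasDerivAt f (f' z) z)
    (hf₀ : f 0 = 0) (hf' : ∀ z, 0 < z → 0 < f' z) {x : ℝ} (hx : 0 < x) : 0 < f x := by
  have hmono : StrictMonoOn f (Ici 0) :=
    strictMonoOn_of_hasDerivWithinAt_pos (convex_Ici 0)
      (fun z _ => (hf z).continuousAt.continuousWithinAt) (fun z _ => (hf z).hasDerivWithinAt)
      (fun z hz => hf' z (by simpa using hz))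
  simpa [hf₀] using hmono self_mem_Ici hx.le hx

namespace Real

variable {x : ℝ}

lemma sinh_lt_mul_cosh (hx : 0 < x) : sinh x < x * cosh x := by
  have h := pos_of_hasDerivAt_pos_of_eq_zero (f := fun z => z * cosh z - sinh z)
    (f' := fun z => z * sinh z)
    (fun z => (((hasDerivAt_id' z).mul (hasDerivAt_cosh z)).sub (hasDerivAt_sinh z)).congr_deriv
      (by ring))
    (by simp) (fun z hz => mul_pos hz (sinh_pos_iff.2 hz)) hx
  simpa using h

lemma two_mul_cosh_lt_mul_sinh_add_two (hx : 0 < x) : 2 * cosh x < x * sinh x + 2 := by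
  have h := pos_of_hasDerivAt_pos_of_eq_zero (f := fun z => z * sinh z + 2 - 2 * cosh z)
    (f' := fun z => z * cosh z - sinh z)
    (fun z => ((((hasDerivAt_id' z).mul (hasDerivAt_sinh z)).add_const 2).sub
      ((hasDerivAt_cosh z).const_mul 2)).congr_deriv (by ring))
    (by simp) (fun z hz => sub_pos.2 (sinh_lt_mul_cosh hz)) hx
  simpa using h

lemma three_mul_sinh_lt_mul_cosh_add_two_mul (hx : 0 < x) :
    3 * sinh x < x * cosh x + 2 * x := by
  have h := pos_of_hasDerivAt_pos_of_eq_zero (f := fun z => z * cosh z + 2 * z - 3 * sinh z)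
    (f' := fun z => z * sinh z + 2 - 2 * cosh z)
    (fun z => ((((hasDerivAt_id' z).mul (hasDerivAt_cosh z)).add
      ((hasDerivAt_id' z).const_mul 2)).sub ((hasDerivAt_sinh z).const_mul 3)).congr_deriv
      (by ring))
    (by simp) (fun z hz => by linarith [two_mul_cosh_lt_mul_sinh_add_two hz]) hx
  simpa using h

lemma sinh_div_lt_cosh_add_two_div_three (hx : 0 < x) : sinh x / x < (cosh x + 2) / 3 := by
  rw [div_lt_div_iff₀ hx three_pos]
  linarith [three_mul_sinh_lt_mul_cosh_add_two_mul hx]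

lemma cosh_sq_eq_cosh_two_mul_add_one_div_two (x : ℝ) : cosh x ^ 2 = (cosh (2 * x) + 1) / 2 := by
  rw [cosh_two_mul, cosh_sq]
  ring

lemma cosh_three_mul_add_two_pow_three_lt (hx : x ≠ 0) :
    (cosh (3 * x) + 2) ^ 3 < 27 * cosh (3 * x) * cosh x ^ 6 := by
  obtain ⟨s, hs, hc⟩ : ∃ s, 0 < s ∧ cosh x = 1 + s :=
    ⟨cosh x - 1, sub_pos.2 (one_lt_cosh.2 hx), by ring⟩
  rw [cosh_three_mul, hc, ← sub_pos]
  have hpoly : 27 * (4 * (1 + s) ^ 3 - 3 * (1 + s)) * (1 + s) ^ 6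
      - (4 * (1 + s) ^ 3 - 3 * (1 + s) + 2) ^ 3
      = s * (162 + 1134 * s + 3456 * s ^ 2 + 5913 * s ^ 3 + 6183 * s ^ 4 + 4041 * s ^ 5
        + 1647 * s ^ 6 + 396 * s ^ 7 + 44 * s ^ 8) := by ring
  rw [hpoly]
  positivity

lemma cosh_add_two_div_three_lt (hx : 0 < x) :
    (cosh x + 2) / 3 < cosh x ^ ((1 : ℝ) / 3) * ((cosh (2 * x / 3) + 1) / 2) := by
  obtain ⟨y, rfl⟩ : ∃ y, x = 3 * y := ⟨x / 3, by ring⟩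
  rw [show 2 * (3 * y) / 3 = 2 * y by ring, ← cosh_sq_eq_cosh_two_mul_add_one_div_two]
  refine lt_of_pow_lt_pow_left₀ 3 (by positivity) ?_
  have hcube : (cosh (3 * y) ^ ((1 : ℝ) / 3)) ^ 3 = cosh (3 * y) := by
    simpa using rpow_inv_natCast_pow (cosh_pos (3 * y)).le three_ne_zero
  rw [div_pow, mul_pow, hcube, div_lt_iff₀ (by norm_num)]
  linarith [cosh_three_mul_add_two_pow_three_lt (by linarith : 0 < y).ne']

end Real

theorem stmt9 (x : ℝ) (hx : 0 < x) :
    Real.sinh x / x < (Real.cosh x + 2) / 3 ∧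
    (Real.cosh x + 2) / 3 <
      Real.cosh x ^ ((1 : ℝ) / 3) * ((Real.cosh (2 * x / 3) + 1) / 2) :=
  ⟨sinh_div_lt_cosh_add_two_div_three hx, cosh_add_two_div_three_lt hx⟩
end

section
/- For all x > 0, one has (x/sinh x)² + x/tanh x > 2. -/
open Real

private lemma aux_pos {f : ℝ → ℝ} (hf : Differentiable ℝ f) (h0 : f 0 = 0)
    (hd : ∀ t : ℝ, 0 < t → 0 < deriv f t) {x : ℝ} (hx : 0 < x) : 0 < f x := by
  have hm : StrictMonoOn f (Set.Ici 0) :=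
    strictMonoOn_of_deriv_pos (convex_Ici 0) hf.continuous.continuousOn
      (fun t ht => hd t (by simpa using ht))
  have := hm (Set.self_mem_Ici) (Set.mem_Ici.mpr hx.le) hx
  simpa [h0] using this

private lemma lem1 {x : ℝ} (hx : 0 < x) : Real.sinh x < x * Real.cosh x := by
  have h : 0 < x * Real.cosh x - Real.sinh x := by
    apply aux_pos (f := fun t => t * Real.cosh t - Real.sinh t)
    · exact (differentiable_id.mul Real.differentiable_cosh).sub Real.differentiable_sinh
    · simp
    · intro t ht
      have h1 : HasDerivAt (fun t : ℝ => t * Real.cosh t - Real.sinh t)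
          (1 * Real.cosh t + t * Real.sinh t - Real.cosh t) t :=
        ((hasDerivAt_id t).mul (Real.hasDerivAt_cosh t)).sub (Real.hasDerivAt_sinh t)
      rw [h1.deriv]
      have := Real.sinh_pos_iff.mpr ht
      nlinarith
    · exact hx
  linarith

private lemma lem2 {x : ℝ} (hx : 0 < x) : 2 * Real.cosh x - 2 < x * Real.sinh x := by
  have h : 0 < x * Real.sinh x - (2 * Real.cosh x - 2) := by
    apply aux_pos (f := fun t => t * Real.sinh t - (2 * Real.cosh t - 2))
    · exact (differentiable_id.mul Real.differentiable_sinh).sub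
        ((Real.differentiable_cosh.const_mul 2).sub (differentiable_const 2))
    · simp
    · intro t ht
      have h1 : HasDerivAt (fun t : ℝ => t * Real.sinh t - (2 * Real.cosh t - 2))
          (1 * Real.sinh t + t * Real.cosh t - (2 * Real.sinh t - 0)) t :=
        ((hasDerivAt_id t).mul (Real.hasDerivAt_sinh t)).sub
          (((Real.hasDerivAt_cosh t).const_mul 2).sub (hasDerivAt_const t 2))
      rw [h1.deriv]
      have := lem1 ht
      linarith
    · exact hx
  linarith

private lemma lem3 {x : ℝ} (hx : 0 < x) : 3 * Real.sinh x < 2 * x + x * Real.cosh x := by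
  have h : 0 < 2 * x + x * Real.cosh x - 3 * Real.sinh x := by
    apply aux_pos (f := fun t => 2 * t + t * Real.cosh t - 3 * Real.sinh t)
    · exact ((differentiable_id.const_mul 2).add
        (differentiable_id.mul Real.differentiable_cosh)).sub
        (Real.differentiable_sinh.const_mul 3)
    · simp
    · intro t ht
      have h1 : HasDerivAt (fun t : ℝ => 2 * t + t * Real.cosh t - 3 * Real.sinh t)
          (2 * 1 + (1 * Real.cosh t + t * Real.sinh t) - 3 * Real.cosh t) t :=
        (((hasDerivAt_id t).const_mul 2).add
          ((hasDerivAt_id t).mul (Real.hasDerivAt_cosh t))).sub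
          ((Real.hasDerivAt_sinh t).const_mul 3)
      rw [h1.deriv]
      have := lem2 ht
      linarith
    · exact hx
  linarith

private lemma lem4 {x : ℝ} (hx : 0 < x) :
    0 < x ^ 2 + x * Real.sinh x - 4 * Real.cosh x + 4 := by
  have h : 0 < x ^ 2 + x * Real.sinh x - (4 * Real.cosh x - 4) := by
    apply aux_pos (f := fun t => t ^ 2 + t * Real.sinh t - (4 * Real.cosh t - 4))
    · exact ((differentiable_pow 2).add (differentiable_id.mul Real.differentiable_sinh)).sub
        ((Real.differentiable_cosh.const_mul 4).sub (differentiable_const 4))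
    · simp
    · intro t ht
      have h1 : HasDerivAt (fun t : ℝ => t ^ 2 + t * Real.sinh t - (4 * Real.cosh t - 4))
          ((2 : ℕ) * t ^ 1 + (1 * Real.sinh t + t * Real.cosh t) - (4 * Real.sinh t - 0)) t :=
        ((hasDerivAt_pow 2 t).add ((hasDerivAt_id t).mul (Real.hasDerivAt_sinh t))).sub
          (((Real.hasDerivAt_cosh t).const_mul 4).sub (hasDerivAt_const t 4))
      rw [h1.deriv]
      have := lem3 ht
      simp only [pow_one]
      push_cast
      linarith
    · exact hx
  linarith

theorem stmt11 (x : ℝ) (hx : 0 < x) :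
    2 < (x / Real.sinh x) ^ 2 + x / Real.tanh x := by
  have hs : 0 < Real.sinh x := Real.sinh_pos_iff.mpr hx
  have hc : 0 < Real.cosh x := Real.cosh_pos x
  -- key inequality from lem4 applied at 2x
  have hg := lem4 (by linarith : (0:ℝ) < 2 * x)
  have hsinh2 : Real.sinh (2 * x) = 2 * Real.sinh x * Real.cosh x := Real.sinh_two_mul x
  have hcosh2 : Real.cosh (2 * x) = Real.cosh x ^ 2 + Real.sinh x ^ 2 := Real.cosh_two_mul x
  have hsq : Real.cosh x ^ 2 = 1 + Real.sinh x ^ 2 := Real.cosh_sq' x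
  have key : 2 * Real.sinh x ^ 2 < x ^ 2 + x * (Real.sinh x * Real.cosh x) := by
    rw [hsinh2, hcosh2, hsq] at hg
    nlinarith
  rw [Real.tanh_eq_sinh_div_cosh, div_div_eq_mul_div, div_pow, div_add_div _ _ (by positivity)
    (by positivity), lt_div_iff₀ (by positivity)]
  ring_nf
  nlinarith [sq_nonneg (Real.sinh x), hs, hc, key]
end

section
/- For all x ∈ (0, π/2), one has exp(α − (π−2)x²/(2π)) < ((π−2)·cos x + 2)/π < exp(−(π−2)x²/(2π)), where α = (π² + 8·log(2/π) − 2π)/8, and the constants α and 0 are best possible. -/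
/-! With `F x = ((π - 2) cos x + 2) / π · exp ((π - 2) x² / (2π))` the two bounds read
`exp α < F x < 1`, where `1 = F 0` and `exp α = F (π / 2)`; since `F` is continuous, the
constants are then best possible. One computes `F' = -(π - 2) / π² · exp (…) · g` with
`g x = π sin x - x ((π - 2) cos x + 2)`, so it suffices that `g > 0` on `(0, π / 2)`.
Now `g'''` decreases from `2π - 6 > 0` to a negative value, while `g''` and `g'` vanish at `0`
and are negative at `π / 2`; going up the chain, `g''` and then `g'` change sign once, from
`+` to `-`. So `g` rises and then falls, and it vanishes at both endpoints. -/

open Real Set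

def IsPosThenNeg (f : ℝ → ℝ) (a b : ℝ) : Prop :=
  ∃ c ∈ Ioo a b, (∀ x ∈ Ioo a c, 0 < f x) ∧ ∀ x ∈ Ioo c b, f x < 0

namespace IsPosThenNeg

variable {f f' : ℝ → ℝ} {a b : ℝ}

theorem of_strictAntiOn (hab : a ≤ b) (hf : ContinuousOn f (Icc a b))
    (hanti : StrictAntiOn f (Icc a b)) (ha : 0 < f a) (hb : f b < 0) : IsPosThenNeg f a b := by
  obtain ⟨c, hc, hfc⟩ := intermediate_value_Ioo' hab hf ⟨hb, ha⟩
  refine ⟨c, hc, fun x hx => ?_, fun x hx => ?_⟩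
  · rw [← hfc]
    exact hanti ⟨hx.1.le, hx.2.le.trans hc.2.le⟩ ⟨hc.1.le, hc.2.le⟩ hx.2
  · rw [← hfc]
    exact hanti ⟨hc.1.le, hc.2.le⟩ ⟨hc.1.le.trans hx.1.le, hx.2.le⟩ hx.1

theorem strictMonoOn_strictAntiOn (hf : ContinuousOn f (Icc a b))
    (hderiv : ∀ x ∈ Ioo a b, HasDerivAt f (f' x) x) (h : IsPosThenNeg f' a b) :
    ∃ c ∈ Ioo a b, StrictMonoOn f (Icc a c) ∧ StrictAntiOn f (Icc c b) := by
  obtain ⟨c, hc, hpos, hneg⟩ := h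
  refine ⟨c, hc, ?_, ?_⟩
  · refine strictMonoOn_of_deriv_pos (convex_Icc a c) (hf.mono (Icc_subset_Icc_right hc.2.le))
      fun x hx => ?_
    rw [interior_Icc] at hx
    rw [(hderiv x ⟨hx.1, hx.2.trans hc.2⟩).deriv]
    exact hpos x hx
  · refine strictAntiOn_of_deriv_neg (convex_Icc c b) (hf.mono (Icc_subset_Icc_left hc.1.le))
      fun x hx => ?_
    rw [interior_Icc] at hx
    rw [(hderiv x ⟨hc.1.trans hx.1, hx.2⟩).deriv]
    exact hneg x hx

theorem of_deriv (hf : ContinuousOn f (Icc a b)) (hderiv : ∀ x ∈ Ioo a b, HasDerivAt f (f' x) x)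
    (h : IsPosThenNeg f' a b) (ha : 0 ≤ f a) (hb : f b < 0) : IsPosThenNeg f a b := by
  obtain ⟨c, hc, hmono, hanti⟩ := h.strictMonoOn_strictAntiOn hf hderiv
  have hmono_pos : ∀ x ∈ Ioc a c, 0 < f x := fun x hx =>
    ha.trans_lt (hmono ⟨le_rfl, hc.1.le⟩ ⟨hx.1.le, hx.2⟩ hx.1)
  obtain ⟨d, hd, hpos, hneg⟩ := of_strictAntiOn hc.2.le (hf.mono (Icc_subset_Icc_left hc.1.le)) hanti
    (hmono_pos c ⟨hc.1, le_rfl⟩) hb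
  refine ⟨d, ⟨hc.1.trans hd.1, hd.2⟩, fun x hx => ?_, hneg⟩
  rcases le_or_gt x c with hxc | hcx
  · exact hmono_pos x ⟨hx.1, hxc⟩
  · exact hpos x ⟨hcx, hx.2⟩

theorem pos_of_deriv (hf : ContinuousOn f (Icc a b))
    (hderiv : ∀ x ∈ Ioo a b, HasDerivAt f (f' x) x) (h : IsPosThenNeg f' a b)
    (ha : 0 ≤ f a) (hb : 0 ≤ f b) : ∀ x ∈ Ioo a b, 0 < f x := by
  obtain ⟨c, hc, hmono, hanti⟩ := h.strictMonoOn_strictAntiOn hf hderiv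
  intro x hx
  rcases le_or_gt x c with hxc | hcx
  · exact ha.trans_lt (hmono ⟨le_rfl, hc.1.le⟩ ⟨hx.1.le, hxc⟩ hx.1)
  · exact hb.trans_lt (hanti ⟨hcx.le, hx.2.le⟩ ⟨hc.2.le, le_rfl⟩ hx.2)

end IsPosThenNeg

noncomputable def cosGauss (x : ℝ) : ℝ :=
  ((π - 2) * cos x + 2) / π * exp ((π - 2) * x ^ 2 / (2 * π))

noncomputable def cosGaussDefect (x : ℝ) : ℝ :=
  π * sin x - x * ((π - 2) * cos x + 2)

theorem continuous_cosGauss : Continuous cosGauss := by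
  unfold cosGauss
  fun_prop

theorem hasDerivAt_cosGauss (x : ℝ) :
    HasDerivAt cosGauss
      (-((π - 2) / π ^ 2 * exp ((π - 2) * x ^ 2 / (2 * π)) * cosGaussDefect x)) x :=
  ((((((hasDerivAt_cos x).const_mul (π - 2)).add_const 2).div_const π).mul
    (((hasDerivAt_pow 2 x).const_mul (π - 2)).div_const (2 * π)).exp)).congr_deriv (by
      unfold cosGaussDefect
      field_simp [pi_ne_zero]
      ring)

theorem isPosThenNeg_cosGaussDefect_deriv3 :
    IsPosThenNeg (fun x => (2 * π - 6) * cos x - (π - 2) * x * sin x) 0 (π / 2) := by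
  have hderiv (x : ℝ) : HasDerivAt (fun x => (2 * π - 6) * cos x - (π - 2) * x * sin x)
      (-((3 * π - 8) * sin x + (π - 2) * x * cos x)) x :=
    (((hasDerivAt_cos x).const_mul (2 * π - 6)).sub
      (((hasDerivAt_id' x).const_mul (π - 2)).mul (hasDerivAt_sin x))).congr_deriv (by ring)
  have hanti : StrictAntiOn (fun x => (2 * π - 6) * cos x - (π - 2) * x * sin x)
      (Icc 0 (π / 2)) := by
    refine strictAntiOn_of_deriv_neg (convex_Icc _ _) (by fun_prop) fun x hx => ?_
    rw [interior_Icc] at hx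
    have hsin := sin_pos_of_pos_of_lt_pi hx.1 (by linarith [hx.2, pi_pos])
    have hcos := cos_pos_of_mem_Ioo ⟨by linarith [hx.1, pi_pos], hx.2⟩
    rw [(hderiv x).deriv, neg_lt_zero]
    have h3 : 0 < 3 * π - 8 := by linarith [pi_gt_three]
    have h2 : 0 < π - 2 := by linarith [pi_gt_three]
    exact add_pos (mul_pos h3 hsin) (mul_pos (mul_pos h2 hx.1) hcos)
  refine IsPosThenNeg.of_strictAntiOn (by positivity) (by fun_prop) hanti ?_ ?_
  · simp only [cos_zero, sin_zero]
    linarith [pi_gt_three]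
  · simp only [cos_pi_div_two, sin_pi_div_two]
    nlinarith [pi_gt_three]

theorem cosGaussDefect_pos : ∀ x ∈ Ioo 0 (π / 2), 0 < cosGaussDefect x := by
  have hpi_gt := pi_gt_three
  have hpi_lt := pi_lt_d2
  have hderiv (x : ℝ) : HasDerivAt cosGaussDefect (2 * cos x + (π - 2) * x * sin x - 2) x :=
    (((hasDerivAt_sin x).const_mul π).sub
      ((hasDerivAt_id' x).mul (((hasDerivAt_cos x).const_mul (π - 2)).add_const 2))).congr_deriv
      (by ring)
  have hderiv2 (x : ℝ) : HasDerivAt (fun x => (π - 4) * sin x + (π - 2) * x * cos x)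
      ((2 * π - 6) * cos x - (π - 2) * x * sin x) x :=
    (((hasDerivAt_sin x).const_mul (π - 4)).add
      (((hasDerivAt_id' x).const_mul (π - 2)).mul (hasDerivAt_cos x))).congr_deriv (by ring)
  have hderiv1 (x : ℝ) : HasDerivAt (fun x => 2 * cos x + (π - 2) * x * sin x - 2)
      ((π - 4) * sin x + (π - 2) * x * cos x) x :=
    ((((hasDerivAt_cos x).const_mul 2).add
      (((hasDerivAt_id' x).const_mul (π - 2)).mul (hasDerivAt_sin x))).sub_const 2).congr_deriv
      (by ring)
  have h2 : IsPosThenNeg (fun x => (π - 4) * sin x + (π - 2) * x * cos x) 0 (π / 2) :=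
    isPosThenNeg_cosGaussDefect_deriv3.of_deriv (by fun_prop) (fun x _ => hderiv2 x)
      (by simp) (by simp only [sin_pi_div_two, cos_pi_div_two]; linarith)
  have h1 : IsPosThenNeg (fun x => 2 * cos x + (π - 2) * x * sin x - 2) 0 (π / 2) :=
    h2.of_deriv (by fun_prop) (fun x _ => hderiv1 x)
      (by simp) (by simp only [sin_pi_div_two, cos_pi_div_two]; nlinarith)
  exact h1.pos_of_deriv (by unfold cosGaussDefect; fun_prop) (fun x _ => hderiv x)
    (by simp [cosGaussDefect]) (by simp [cosGaussDefect])

theorem strictAntiOn_cosGauss : StrictAntiOn cosGauss (Icc 0 (π / 2)) := by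
  refine strictAntiOn_of_deriv_neg (convex_Icc _ _) continuous_cosGauss.continuousOn
    fun x hx => ?_
  rw [interior_Icc] at hx
  rw [(hasDerivAt_cosGauss x).deriv, neg_lt_zero]
  have h2 : 0 < π - 2 := by linarith [pi_gt_three]
  exact mul_pos (mul_pos (by positivity) (exp_pos _)) (cosGaussDefect_pos x hx)

theorem cosGauss_zero : cosGauss 0 = 1 := by
  simp [cosGauss, pi_ne_zero]

theorem cosGauss_pi_div_two :
    cosGauss (π / 2) = exp ((π ^ 2 + 8 * log (2 / π) - 2 * π) / 8) := by
  have hexponent : (π ^ 2 + 8 * log (2 / π) - 2 * π) / 8 =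
      log (2 / π) + (π - 2) * (π / 2) ^ 2 / (2 * π) := by
    field_simp [pi_ne_zero]
    ring
  rw [hexponent, exp_add, exp_log (by positivity), cosGauss, cos_pi_div_two]
  ring

theorem exp_sub_lt_iff_lt_cosGauss {y x : ℝ} :
    exp (y - (π - 2) * x ^ 2 / (2 * π)) < ((π - 2) * cos x + 2) / π ↔ exp y < cosGauss x := by
  rw [exp_sub, div_lt_iff₀ (exp_pos _), cosGauss]

theorem lt_exp_sub_iff_cosGauss_lt {y x : ℝ} :
    ((π - 2) * cos x + 2) / π < exp (y - (π - 2) * x ^ 2 / (2 * π)) ↔ cosGauss x < exp y := by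
  rw [exp_sub, lt_div_iff₀ (exp_pos _), cosGauss]

theorem stmt12 :
    (∀ x : ℝ, x ∈ Ioo 0 (π / 2) →
      Real.exp ((π ^ 2 + 8 * Real.log (2 / π) - 2 * π) / 8 - (π - 2) * x ^ 2 / (2 * π)) <
        ((π - 2) * Real.cos x + 2) / π ∧
      ((π - 2) * Real.cos x + 2) / π < Real.exp (0 - (π - 2) * x ^ 2 / (2 * π))) ∧
    (∀ a : ℝ,
      (∀ x : ℝ, x ∈ Ioo 0 (π / 2) →
        Real.exp (a - (π - 2) * x ^ 2 / (2 * π)) < ((π - 2) * Real.cos x + 2) / π) →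
      a ≤ (π ^ 2 + 8 * Real.log (2 / π) - 2 * π) / 8) ∧
    (∀ b : ℝ,
      (∀ x : ℝ, x ∈ Ioo 0 (π / 2) →
        ((π - 2) * Real.cos x + 2) / π < Real.exp (b - (π - 2) * x ^ 2 / (2 * π))) →
      0 ≤ b) := by
  have hπ : (0 : ℝ) < π / 2 := by positivity
  have hclosure : closure (Ioo 0 (π / 2)) = Icc 0 (π / 2) := closure_Ioo hπ.ne
  have hcont := continuous_cosGauss.continuousOn (s := closure (Ioo 0 (π / 2)))
  refine ⟨fun x hx => ?_, fun a ha => ?_, fun b hb => ?_⟩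
  · have hmem := Ioo_subset_Icc_self hx
    rw [exp_sub_lt_iff_lt_cosGauss, lt_exp_sub_iff_cosGauss_lt, ← cosGauss_pi_div_two, exp_zero,
      ← cosGauss_zero]
    exact ⟨strictAntiOn_cosGauss hmem ⟨hπ.le, le_rfl⟩ hx.2,
      strictAntiOn_cosGauss ⟨le_rfl, hπ.le⟩ hmem hx.1⟩
  · have := le_on_closure (fun x hx => (exp_sub_lt_iff_lt_cosGauss.1 (ha x hx)).le)
      continuousOn_const hcont (hclosure ▸ right_mem_Icc.2 hπ.le)
    rwa [cosGauss_pi_div_two, exp_le_exp] at this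
  · have := le_on_closure (fun x hx => (lt_exp_sub_iff_cosGauss_lt.1 (hb x hx)).le)
      hcont continuousOn_const (hclosure ▸ left_mem_Icc.2 hπ.le)
    rwa [cosGauss_zero, ← exp_zero, exp_le_exp] at this
end

section
/- For all x ∈ (0, π/2), one has (cos x + 2^{α₂})/3 < sin x / x < (cos x + 2)/3, where α₂ = log(6/π)/log 2, and both constants are best possible. -/
open Real Set

-- x cos x < sin x on (0, π/2)
lemma aux_mul_cos_lt_sin {x : ℝ} (h1 : 0 < x) (h2 : x < π/2) : x * Real.cos x < Real.sin x := by
  have hc : 0 < Real.cos x := Real.cos_pos_of_mem_Ioo ⟨by linarith [Real.pi_pos], h2⟩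
  have := Real.lt_tan h1 h2
  rw [Real.tan_eq_sin_div_cos, lt_div_iff₀ hc] at this
  linarith

noncomputable def hfun (x : ℝ) : ℝ := 3 * Real.sin x - x * Real.cos x - (6/π) * x
noncomputable def gfun (x : ℝ) : ℝ := x * (Real.cos x + 2) - 3 * Real.sin x

lemma hfun_hasDeriv (x : ℝ) : HasDerivAt hfun (2 * Real.cos x + x * Real.sin x - 6/π) x := by
  have : HasDerivAt hfun (3 * Real.cos x - (1 * Real.cos x + x * -Real.sin x) - (6/π) * 1) x := by
    exact (((Real.hasDerivAt_sin x).const_mul 3).sub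
      ((hasDerivAt_id x).mul (Real.hasDerivAt_cos x))).sub ((hasDerivAt_id x).const_mul (6/π))
  convert this using 1; ring

lemma hfun_deriv : deriv hfun = fun x => 2 * Real.cos x + x * Real.sin x - 6/π := by
  funext x; exact (hfun_hasDeriv x).deriv

lemma hfun_deriv2 (x : ℝ) : deriv (deriv hfun) x = x * Real.cos x - Real.sin x := by
  rw [hfun_deriv]
  have : HasDerivAt (fun x => 2 * Real.cos x + x * Real.sin x - 6/π)
      (2 * -Real.sin x + (1 * Real.sin x + x * Real.cos x) - 0) x := by
    exact (((Real.hasDerivAt_cos x).const_mul 2).add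
      ((hasDerivAt_id x).mul (Real.hasDerivAt_sin x))).sub (hasDerivAt_const x _)
  have := this.deriv
  rw [this]; ring

lemma gfun_hasDeriv (x : ℝ) : HasDerivAt gfun (2 - 2 * Real.cos x - x * Real.sin x) x := by
  have : HasDerivAt gfun (1 * (Real.cos x + 2) + x * (-Real.sin x + 0) - 3 * Real.cos x) x := by
    exact (((hasDerivAt_id x).mul ((Real.hasDerivAt_cos x).add (hasDerivAt_const x 2)))).sub
      ((Real.hasDerivAt_sin x).const_mul 3)
  convert this using 1; ring

lemma hfun_pos {x : ℝ} (hx : x ∈ Ioo 0 (π/2)) : 0 < hfun x := by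
  have hpi : (0:ℝ) < π := Real.pi_pos
  have hconc : StrictConcaveOn ℝ (Icc 0 (π/2)) hfun := by
    apply strictConcaveOn_of_deriv2_neg (convex_Icc _ _)
    · exact (Continuous.continuousOn (by unfold hfun; fun_prop))
    · intro y hy
      rw [interior_Icc] at hy
      rw [Function.iterate_succ, Function.iterate_one, Function.comp_apply, hfun_deriv2]
      linarith [aux_mul_cos_lt_sin hy.1 hy.2]
  have h0 : hfun 0 = 0 := by simp [hfun]
  have h1 : hfun (π/2) = 0 := by
    simp [hfun, Real.sin_pi_div_two, Real.cos_pi_div_two]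
    field_simp
    norm_num
  obtain ⟨hx0, hx2⟩ := hx
  set t : ℝ := x / (π/2) with ht
  have ht0 : 0 < t := by positivity
  have ht1 : t < 1 := by rw [ht, div_lt_one (by positivity)]; exact hx2
  have key := hconc.2 (left_mem_Icc.2 (by positivity)) (right_mem_Icc.2 (by positivity))
    (by positivity) (sub_pos.2 ht1) ht0 (by ring)
  rw [h0, h1] at key
  simp only [smul_eq_mul, mul_zero, add_zero, zero_add] at key
  have hxeq : t * (π/2) = x := div_mul_cancel₀ x (by positivity)
  simpa [hxeq] using key

lemma gfun_pos {x : ℝ} (hx : x ∈ Ioo 0 (π/2)) : 0 < gfun x := by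
  have hpi : (0:ℝ) < π := Real.pi_pos
  have hmono : StrictMonoOn gfun (Icc 0 (π/2)) := by
    apply strictMonoOn_of_deriv_pos (convex_Icc _ _)
    · exact (Continuous.continuousOn (by unfold gfun; fun_prop))
    · intro y hy
      rw [interior_Icc] at hy
      rw [(gfun_hasDeriv y).deriv]
      obtain ⟨hy0, hy2⟩ := hy
      have h2 : 0 < y/2 := by linarith
      have h2' : y/2 < π/2 := by linarith
      have hs : 0 < Real.sin (y/2) := Real.sin_pos_of_pos_of_lt_pi h2 (by linarith)
      have htan := aux_mul_cos_lt_sin h2 h2'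
      have hcos : Real.cos y = 1 - 2 * Real.sin (y/2)^2 := by
        have e := Real.cos_two_mul (y/2)
        rw [show 2*(y/2) = y by ring] at e
        have h2 := Real.sin_sq_add_cos_sq (y/2)
        nlinarith
      have hsin : Real.sin y = 2 * Real.sin (y/2) * Real.cos (y/2) := by
        rw [← Real.sin_two_mul]; ring_nf
      rw [hcos, hsin]
      nlinarith
  have h0 : gfun 0 = 0 := by simp [gfun]
  have := hmono (left_mem_Icc.2 (by positivity)) ⟨le_of_lt hx.1, le_of_lt hx.2⟩ hx.1
  rwa [h0] at this

lemma two_rpow_alpha : (2:ℝ) ^ (Real.log (6/π) / Real.log 2) = 6/π := by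
  have hpi := Real.pi_pos
  rw [Real.rpow_def_of_pos (by norm_num), mul_comm,
    div_mul_cancel₀ _ (ne_of_gt (Real.log_pos one_lt_two))]
  exact Real.exp_log (by positivity)

lemma sin_div_tendsto : Filter.Tendsto (fun x => Real.sin x / x) (nhdsWithin 0 (Ioi 0)) (nhds 1) := by
  have h : HasDerivAt Real.sin 1 0 := by simpa using Real.hasDerivAt_sin 0
  rw [hasDerivAt_iff_tendsto_slope] at h
  have h2 : Filter.Tendsto (slope Real.sin 0) (nhdsWithin 0 (Ioi 0)) (nhds 1) :=
    h.mono_left (nhdsWithin_mono _ (fun x hx => ne_of_gt hx))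
  refine h2.congr (fun x => ?_)
  simp [slope_def_field]

theorem stmt14 :
    (∀ x : ℝ, x ∈ Ioo 0 (π / 2) →
      (Real.cos x + (2 : ℝ) ^ (Real.log (6 / π) / Real.log 2)) / 3 < Real.sin x / x ∧
      Real.sin x / x < (Real.cos x + 2) / 3) ∧
    (∀ c : ℝ,
      (∀ x : ℝ, x ∈ Ioo 0 (π / 2) →
        (Real.cos x + (2 : ℝ) ^ c) / 3 < Real.sin x / x) →
      c ≤ Real.log (6 / π) / Real.log 2) ∧
    (∀ b : ℝ,
      (∀ x : ℝ, x ∈ Ioo 0 (π / 2) →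
        Real.sin x / x < (Real.cos x + (2 : ℝ) ^ b) / 3) →
      1 ≤ b) := by
  have hpi := Real.pi_pos
  refine ⟨fun x hx => ?_, fun c hc => ?_, fun b hb => ?_⟩
  · obtain ⟨hx0, hx2⟩ := hx
    constructor
    · rw [two_rpow_alpha, div_lt_div_iff₀ (by norm_num) hx0]
      have := hfun_pos ⟨hx0, hx2⟩
      unfold hfun at this; linarith
    · rw [div_lt_div_iff₀ hx0 (by norm_num)]
      have := gfun_pos ⟨hx0, hx2⟩
      unfold gfun at this; linarith
  · have key : (2:ℝ) ^ c ≤ 6/π := by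
      have hne : (π/2) ≠ 0 := by positivity
      have hcont : Filter.Tendsto (fun x => 3 * (Real.sin x / x) - Real.cos x)
          (nhdsWithin (π/2) (Iio (π/2))) (nhds (6/π)) := by
        have hc1 : ContinuousAt (fun x => 3 * (Real.sin x / x) - Real.cos x) (π/2) :=
          ((Real.continuous_sin.continuousAt.div continuousAt_id hne).const_mul 3).sub
            Real.continuous_cos.continuousAt
        have h2 : Filter.Tendsto (fun x => 3 * (Real.sin x / x) - Real.cos x)
            (nhdsWithin (π/2) (Iio (π/2)))
            (nhds (3 * (Real.sin (π/2) / (π/2)) - Real.cos (π/2))) :=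
          hc1.tendsto.mono_left nhdsWithin_le_nhds
        have heq : 3 * (Real.sin (π/2) / (π/2)) - Real.cos (π/2) = 6/π := by
          rw [Real.sin_pi_div_two, Real.cos_pi_div_two]; field_simp; ring
        rwa [heq] at h2
      refine ge_of_tendsto hcont ?_
      filter_upwards [Ioo_mem_nhdsLT_of_mem (⟨by linarith, le_refl _⟩ : π/2 ∈ Ioc 0 (π/2))]
        with x hx
      have hlt := hc x hx
      have hx0 : 0 < x := hx.1
      rw [div_lt_div_iff₀ (by norm_num) hx0] at hlt
      have h3 : Real.cos x + (2:ℝ)^c < 3 * (Real.sin x / x) := by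
        rw [← mul_div_assoc, lt_div_iff₀ hx0]
        linarith
      linarith
    rw [← two_rpow_alpha] at key
    exact (Real.rpow_le_rpow_left_iff (by norm_num : (1:ℝ) < 2)).1 key
  · have key : (2:ℝ) ≤ (2:ℝ) ^ b := by
      have hcont : Filter.Tendsto (fun x => (Real.cos x + (2:ℝ)^b)/3 - Real.sin x / x)
          (nhdsWithin 0 (Ioi 0)) (nhds ((1 + (2:ℝ)^b)/3 - 1)) := by
        have hc1 : Filter.Tendsto (fun x => (Real.cos x + (2:ℝ)^b)/3)
            (nhdsWithin (0:ℝ) (Ioi 0)) (nhds ((1 + (2:ℝ)^b)/3)) := by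
          have hca : ContinuousAt (fun x => (Real.cos x + (2:ℝ)^b)/3) 0 := by fun_prop
          have h2 : Filter.Tendsto (fun x => (Real.cos x + (2:ℝ)^b)/3)
              (nhdsWithin (0:ℝ) (Ioi 0)) (nhds ((Real.cos 0 + (2:ℝ)^b)/3)) :=
            hca.tendsto.mono_left nhdsWithin_le_nhds
          simpa using h2
        exact hc1.sub sin_div_tendsto
      have hle : (0:ℝ) ≤ (1 + (2:ℝ)^b)/3 - 1 := by
        refine ge_of_tendsto hcont ?_
        filter_upwards [Ioo_mem_nhdsGT_of_mem (⟨le_refl _, by linarith⟩ : (0:ℝ) ∈ Ico 0 (π/2))]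
          with x hx
        have := hb x hx
        linarith
      linarith
    have key2 : (2:ℝ) ^ (1:ℝ) ≤ (2:ℝ) ^ b := by rwa [Real.rpow_one]
    exact (Real.rpow_le_rpow_left_iff (by norm_num : (1:ℝ) < 2)).1 key2
end

section
/- The function f(x) = x·(2 + cos x)/sin x is strictly increasing on (0, π/2). -/
/-! Writing `f x = x (2 + cos x) / sin x`, one has `f' = N / sin² x` with
`N x = 2 sin x + sin x cos x - x - 2 x cos x` (`derivNumer` below). Since `N 0 = 0` and
`N' x = 2 sin x (x - sin x) > 0` on `(0, π)`, `N` is positive there, so `f` is strictly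
increasing on all of `(0, π)`. -/

open Real Set

noncomputable def derivNumer (x : ℝ) : ℝ :=
  2 * sin x + sin x * cos x - x - 2 * (x * cos x)

lemma hasDerivAt_derivNumer (x : ℝ) :
    HasDerivAt derivNumer (2 * sin x * (x - sin x)) x := by
  have h := ((((hasDerivAt_sin x).const_mul 2).add ((hasDerivAt_sin x).mul (hasDerivAt_cos x))).sub
    (hasDerivAt_id x)).sub (((hasDerivAt_id x).mul (hasDerivAt_cos x)).const_mul 2)
  refine h.congr_deriv ?_
  simp only [id]
  linear_combination sin_sq_add_cos_sq x

lemma strictMonoOn_derivNumer : StrictMonoOn derivNumer (Icc 0 π) := by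
  refine strictMonoOn_of_hasDerivWithinAt_pos (convex_Icc 0 π) ?_
    (fun x _ => (hasDerivAt_derivNumer x).hasDerivWithinAt) ?_
  · exact (continuous_iff_continuousAt.2
      fun x => (hasDerivAt_derivNumer x).continuousAt).continuousOn
  · intro x hx
    rw [interior_Icc] at hx
    have hsin_lt : sin x < x := sin_lt hx.1
    have hsin_pos : 0 < sin x := sin_pos_of_mem_Ioo hx
    nlinarith

lemma derivNumer_pos {x : ℝ} (hx : x ∈ Ioo 0 π) : 0 < derivNumer x := by
  have h0 : derivNumer 0 = 0 := by simp [derivNumer]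
  rw [← h0]
  exact strictMonoOn_derivNumer (left_mem_Icc.2 pi_pos.le) (Ioo_subset_Icc_self hx) hx.1

lemma hasDerivAt_mul_two_add_cos_div_sin {x : ℝ} (hx : sin x ≠ 0) :
    HasDerivAt (fun x => x * (2 + cos x) / sin x) (derivNumer x / sin x ^ 2) x := by
  have h := ((hasDerivAt_id x).mul ((hasDerivAt_const x (2 : ℝ)).add (hasDerivAt_cos x))).div
    (hasDerivAt_sin x) hx
  refine h.congr_deriv ?_
  simp only [id, Pi.mul_apply, Pi.add_apply, derivNumer]
  congr 1
  linear_combination -x * sin_sq_add_cos_sq x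

lemma strictMonoOn_mul_two_add_cos_div_sin :
    StrictMonoOn (fun x => x * (2 + cos x) / sin x) (Ioo 0 π) := by
  refine strictMonoOn_of_hasDerivWithinAt_pos (convex_Ioo 0 π) ?_
    (fun x hx => (hasDerivAt_mul_two_add_cos_div_sin
      (sin_pos_of_mem_Ioo (interior_subset hx)).ne').hasDerivWithinAt) ?_
  · exact fun x hx => (hasDerivAt_mul_two_add_cos_div_sin
      (sin_pos_of_mem_Ioo hx).ne').continuousAt.continuousWithinAt
  · intro x hx
    rw [interior_Ioo] at hx
    exact div_pos (derivNumer_pos hx) (pow_pos (sin_pos_of_mem_Ioo hx) 2)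

theorem stmt15 :
    StrictMonoOn (fun x : ℝ => x * (2 + Real.cos x) / Real.sin x) (Ioo 0 (π / 2)) :=
  strictMonoOn_mul_two_add_cos_div_sin.mono (Ioo_subset_Ioo_right (by linarith [pi_pos]))
end

section
/- The function f(x) = 3·(sin x)/x − cos x is strictly decreasing on (0, π/2); consequently 6/π < 3·(sin x)/x − cos x < 2 for x ∈ (0, π/2). -/
/-!
With `sinc` in place of `sin x / x`, the function `3 sinc x - cos x` is continuous on `[0, π/2]`
with value `2` at `0` and `6/π` at `π/2`, so both bounds follow from strict monotonicity on the
closed interval. Its derivative is `-N(x)/x²` with `N(x) = 3 sin x - 3x cos x - x² sin x`;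
`N(0) = 0` and `N'(x) = x (sin x - x cos x) > 0` because `x < tan x`, so `N > 0`.
-/

open Real Set

namespace Real

lemma mul_cos_lt_sin {x : ℝ} (h0 : 0 < x) (hx : x < π / 2) : x * cos x < sin x := by
  have hcos : 0 < cos x := cos_pos_of_mem_Ioo ⟨by linarith [pi_pos], hx⟩
  simpa only [tan_eq_sin_div_cos, lt_div_iff₀ hcos] using lt_tan h0 hx

lemma three_mul_mul_cos_add_sq_mul_sin_lt {x : ℝ} (h0 : 0 < x) (hx : x < π / 2) :
    3 * (x * cos x) + x ^ 2 * sin x < 3 * sin x := by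
  let N : ℝ → ℝ := fun y => 3 * sin y - 3 * (y * cos y) - y ^ 2 * sin y
  have hN : ∀ y, HasDerivAt N (y * (sin y - y * cos y)) y := fun y =>
    ((((hasDerivAt_sin y).const_mul 3).sub
      (((hasDerivAt_id y).mul (hasDerivAt_cos y)).const_mul 3)).sub
      ((hasDerivAt_pow 2 y).mul (hasDerivAt_sin y))).congr_deriv (by simp only [id]; ring)
  have hmono : StrictMonoOn N (Icc 0 (π / 2)) := by
    refine strictMonoOn_of_hasDerivWithinAt_pos (convex_Icc _ _)
      (fun y _ => (hN y).continuousAt.continuousWithinAt) (fun y _ => (hN y).hasDerivWithinAt)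
      fun y hy => ?_
    rw [interior_Icc] at hy
    exact mul_pos hy.1 (sub_pos.2 (mul_cos_lt_sin hy.1 hy.2))
  have := hmono ⟨le_rfl, by positivity⟩ ⟨h0.le, hx.le⟩ h0
  simp only [N, sin_zero, mul_zero, zero_mul, sub_zero] at this
  linarith

lemma hasDerivAt_three_mul_sin_div_sub_cos {x : ℝ} (hx : x ≠ 0) :
    HasDerivAt (fun y => 3 * (sin y / y) - cos y)
      ((3 * (x * cos x) + x ^ 2 * sin x - 3 * sin x) / x ^ 2) x :=
  (((hasDerivAt_sin x).div (hasDerivAt_id x) hx).const_mul 3).sub (hasDerivAt_cos x)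
    |>.congr_deriv (by simp only [id]; field_simp; ring)

lemma strictAntiOn_three_mul_sinc_sub_cos :
    StrictAntiOn (fun x => 3 * sinc x - cos x) (Icc 0 (π / 2)) := by
  refine strictAntiOn_of_hasDerivWithinAt_neg (convex_Icc _ _)
    (f' := fun x => (3 * (x * cos x) + x ^ 2 * sin x - 3 * sin x) / x ^ 2)
    ((continuous_sinc.const_mul 3).sub continuous_cos).continuousOn (fun x hx => ?_)
    fun x hx => ?_
  all_goals rw [interior_Icc] at hx
  · refine (hasDerivAt_three_mul_sin_div_sub_cos hx.1.ne').hasDerivWithinAt.congr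
      (fun y hy => ?_) (by rw [sinc_of_ne_zero hx.1.ne'])
    rw [interior_Icc] at hy
    rw [sinc_of_ne_zero hy.1.ne']
  · exact div_neg_of_neg_of_pos
      (sub_neg.2 (three_mul_mul_cos_add_sq_mul_sin_lt hx.1 hx.2)) (pow_pos hx.1 2)

end Real

theorem stmt16 :
    StrictAntiOn (fun x : ℝ => 3 * (Real.sin x / x) - Real.cos x) (Ioo 0 (π / 2)) ∧
    (∀ x : ℝ, x ∈ Ioo 0 (π / 2) →
      6 / π < 3 * (Real.sin x / x) - Real.cos x ∧
      3 * (Real.sin x / x) - Real.cos x < 2) := by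
  have hanti := strictAntiOn_three_mul_sinc_sub_cos
  have hsinc : EqOn (fun x => 3 * sinc x - cos x) (fun x => 3 * (sin x / x) - cos x)
      (Ioo 0 (π / 2)) := fun x hx => by simp only [sinc_of_ne_zero hx.1.ne']
  have hzero : 3 * sinc 0 - cos 0 = 2 := by norm_num [sinc_zero]
  have hpi_div_two : 3 * sinc (π / 2) - cos (π / 2) = 6 / π := by
    rw [sinc_of_ne_zero (by positivity), sin_pi_div_two, cos_pi_div_two]
    field_simp
    norm_num
  refine ⟨(hanti.mono Ioo_subset_Icc_self).congr hsinc, fun x hx => ⟨?_, ?_⟩⟩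
  · exact hpi_div_two.symm.trans_lt <|
      (hanti (Ioo_subset_Icc_self hx) ⟨by positivity, le_rfl⟩ hx.2).trans_eq (hsinc hx)
  · exact (hsinc hx).symm.trans_lt <|
      (hanti ⟨le_rfl, by positivity⟩ (Ioo_subset_Icc_self hx) hx.1).trans_eq hzero
end
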